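/- Let G be an ordered graph, and let S, T ⊆ E(G) with |S| > |T|. Then there exists an edge e ∈ S \ T such that h(e, G∖T) ≥ min_{f∈S} h(f, G), where G∖T is the spanning subgraph of G obtained by deleting the edges of T. -/

import Mathlib

/-!
Let `m` be the least height in `G` of an edge of `S`, and let `A` and `B` be the sets of edges
entered at the first `(m - 1) N` scanning positions (the rows below `m`) of the height tables
of `G` and of `G ∖ T`. Deleting edges never delays the entry of a surviving edge, so
`A \ T ⊆ B`, and never fills a position left empty in `G`, so `|B| ≤ |A|`. The set `A` misses
`S`. If every edge of `S \ T` had height below `m` in `G ∖ T`, then `S \ T ⊆ B` as well, whence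
`|A| + |S| ≤ |B| + |T| ≤ |A| + |T|`, contradicting `|T| < |S|`.
-/

open scoped Classical

namespace EO

/-- Auxiliary choice function for building the height table: given the list `prev` of the
(optional) entries at all earlier scanning positions, `htPick N G w k prev` is the entry at
scanning position `k`, namely the `w`-largest edge of `G` containing the column vertex
`⟨k % N⟩` of position `k` that does not occur among the earlier entries, if any exists. -/
noncomputable def htPick (N : ℕ) (G : SimpleGraph (Fin N)) (w : Sym2 (Fin N) → ℕ)
    (k : ℕ) (prev : List (Option (Sym2 (Fin N)))) : Option (Sym2 (Fin N)) :=
  if hN : 0 < N then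
    if h : ∃ e, (e ∈ G.edgeSet ∧ (⟨k % N, Nat.mod_lt k hN⟩ : Fin N) ∈ e ∧
          some e ∉ prev) ∧
        ∀ f, (f ∈ G.edgeSet ∧ (⟨k % N, Nat.mod_lt k hN⟩ : Fin N) ∈ f ∧
          some f ∉ prev) → w f ≤ w e
    then some h.choose else none
  else none

/-- The list of the first `k` entries of the height table of the ordered graph `G`
(vertex set `Fin N` with its natural vertex order, edge order given by the injective
weight `w`).  Scanning position `k` corresponds to row `k / N + 1` and column `⟨k % N⟩`,
so scanning positions in increasing order of `k` is exactly scanning the table in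
increasing lexicographic order (row first, then vertex order within a row). -/
noncomputable def htList (N : ℕ) (G : SimpleGraph (Fin N)) (w : Sym2 (Fin N) → ℕ) :
    ℕ → List (Option (Sym2 (Fin N)))
  | 0 => []
  | k + 1 => htList N G w k ++ [htPick N G w k (htList N G w k)]

/-- The entry of the height table of `G` at scanning position `k`: the `w`-largest
not-yet-entered edge containing the column vertex of position `k`, if any. -/
noncomputable def htEntry (N : ℕ) (G : SimpleGraph (Fin N)) (w : Sym2 (Fin N) → ℕ)
    (k : ℕ) : Option (Sym2 (Fin N)) :=
  htPick N G w k (htList N G w k)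

/-- The scanning index at which the edge `e` is entered into the height table
(junk value `0` if `e` is never entered; every edge of `G` is in fact entered exactly
once).  The lexicographic order on table positions corresponds exactly to the order of
scanning indices. -/
noncomputable def htIndex (N : ℕ) (G : SimpleGraph (Fin N)) (w : Sym2 (Fin N) → ℕ)
    (e : Sym2 (Fin N)) : ℕ :=
  if h : ∃ k, htEntry N G w k = some e then Nat.find h else 0

/-- The height (row, `1`-indexed) of the edge `e` in the height table of `G`. -/
noncomputable def height (N : ℕ) (G : SimpleGraph (Fin N)) (w : Sym2 (Fin N) → ℕ)
    (e : Sym2 (Fin N)) : ℕ :=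
  htIndex N G w e / N + 1

/-- The index of the column (vertex) of the edge `e` in the height table of `G`. -/
noncomputable def col (N : ℕ) (G : SimpleGraph (Fin N)) (w : Sym2 (Fin N) → ℕ)
    (e : Sym2 (Fin N)) : ℕ :=
  htIndex N G w e % N

/-- The column vertex of the edge `e` in the height table of `G` (for `N > 0`). -/
noncomputable def colV (N : ℕ) (hN : 0 < N) (G : SimpleGraph (Fin N))
    (w : Sym2 (Fin N) → ℕ) (e : Sym2 (Fin N)) : Fin N :=
  ⟨htIndex N G w e % N, Nat.mod_lt _ hN⟩

/-- A list of edges is increasing (with respect to the edge order given by `w`) if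
consecutive entries are strictly increasing. -/
def Increasing {V : Type*} (w : Sym2 V → ℕ) (l : List (Sym2 V)) : Prop :=
  l.Chain' fun a b => w a < w b

end EO

lemma SimpleGraph.mem_edgeSet_deleteEdges {V : Type*} {G : SimpleGraph V} {T : Set (Sym2 V)}
    {e : Sym2 V} : e ∈ (G.deleteEdges T).edgeSet ↔ e ∈ G.edgeSet ∧ e ∉ T := by
  rw [SimpleGraph.edgeSet_deleteEdges]
  rfl

namespace EO

variable {N : ℕ} {G : SimpleGraph (Fin N)} {w : Sym2 (Fin N) → ℕ} {j k : ℕ}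
  {e : Sym2 (Fin N)}

/-- The condition on `e` inside `htPick` at scanning position `k`. -/
def IsCandidate (G : SimpleGraph (Fin N)) (w : Sym2 (Fin N) → ℕ) (hN : 0 < N) (k : ℕ)
    (e : Sym2 (Fin N)) : Prop :=
  e ∈ G.edgeSet ∧ (⟨k % N, Nat.mod_lt k hN⟩ : Fin N) ∈ e ∧ some e ∉ htList N G w k

noncomputable def placedBefore (N : ℕ) (G : SimpleGraph (Fin N)) (w : Sym2 (Fin N) → ℕ)
    (k : ℕ) : Finset (Sym2 (Fin N)) :=
  Finset.univ.filter fun e => some e ∈ htList N G w k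

noncomputable def filledBefore (N : ℕ) (G : SimpleGraph (Fin N)) (w : Sym2 (Fin N) → ℕ)
    (k : ℕ) : Finset ℕ :=
  (Finset.range k).filter fun j => (htEntry N G w j).isSome

lemma mem_htList {o : Option (Sym2 (Fin N))} :
    o ∈ htList N G w k ↔ ∃ j < k, htEntry N G w j = o := by
  induction k with
  | zero => simp [htList]
  | succ k ih =>
    simp only [htList, List.mem_append, List.mem_singleton, ih]
    constructor
    · rintro (⟨j, hj, rfl⟩ | rfl)
      · exact ⟨j, by omega, rfl⟩
      · exact ⟨k, k.lt_succ_self, rfl⟩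
    · rintro ⟨j, hj, rfl⟩
      rcases Nat.lt_succ_iff_lt_or_eq.mp hj with hj | rfl
      · exact Or.inl ⟨j, hj, rfl⟩
      · exact Or.inr rfl

lemma mem_placedBefore : e ∈ placedBefore N G w k ↔ ∃ j < k, htEntry N G w j = some e := by
  simp [placedBefore, mem_htList]

lemma htEntry_eq_some (h : htEntry N G w k = some e) :
    ∃ hN : 0 < N, IsCandidate G w hN k e ∧ ∀ f, IsCandidate G w hN k f → w f ≤ w e := by
  unfold htEntry htPick at h
  split_ifs at h with hN hex
  obtain rfl := Option.some.inj h
  exact ⟨hN, hex.choose_spec⟩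

lemma exists_htEntry_eq_some_of_isCandidate (hN : 0 < N) (he : IsCandidate G w hN k e) :
    ∃ e', htEntry N G w k = some e' ∧ w e ≤ w e' := by
  obtain ⟨b, hb, hmax⟩ := Finset.exists_max_image
    (Finset.univ.filter fun a => IsCandidate G w hN k a) w ⟨e, by simpa using he⟩
  have hex : ∃ a, IsCandidate G w hN k a ∧ ∀ f, IsCandidate G w hN k f → w f ≤ w a :=
    ⟨b, by simpa using hb, fun f hf => hmax f (by simpa using hf)⟩
  refine ⟨hex.choose, ?_, hex.choose_spec.2 e he⟩
  unfold htEntry htPick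
  rw [dif_pos hN]
  exact dif_pos hex

lemma htEntry_eq_some_inj (hj : htEntry N G w j = some e) (hk : htEntry N G w k = some e) :
    j = k := by
  have hnlt {j k} (hj : htEntry N G w j = some e) (hk : htEntry N G w k = some e) :
      ¬ j < k := fun hjk => by
    obtain ⟨-, ⟨-, -, hnew⟩, -⟩ := htEntry_eq_some hk
    exact hnew (mem_htList.mpr ⟨j, hjk, hj⟩)
  exact le_antisymm (not_lt.mp (hnlt hk hj)) (not_lt.mp (hnlt hj hk))

lemma htEntry_htIndex (h : ∃ k, htEntry N G w k = some e) :
    htEntry N G w (htIndex N G w e) = some e := by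
  rw [htIndex, dif_pos h]
  exact Nat.find_spec h

lemma htIndex_eq_of_htEntry_eq_some (h : htEntry N G w k = some e) : htIndex N G w e = k :=
  htEntry_eq_some_inj (htEntry_htIndex ⟨k, h⟩) h

/-- Every edge is eventually entered: otherwise it would be a candidate in its column in
every row, so infinitely many distinct edges would be entered. -/
lemma exists_htEntry_eq_some (hN : 0 < N) (he : e ∈ G.edgeSet) :
    ∃ k, htEntry N G w k = some e := by
  by_contra! hnever
  obtain ⟨v, hv⟩ : ∃ v, v ∈ e := e.ind fun u v => ⟨v, Sym2.mem_mk_right u v⟩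
  have hcand (r : ℕ) : IsCandidate G w hN (r * N + v) e := by
    refine ⟨he, ?_, fun hmem => ?_⟩
    · have hcol : (⟨(r * N + v) % N, Nat.mod_lt _ hN⟩ : Fin N) = v :=
        Fin.ext (by simp [Nat.add_mod, Nat.mod_eq_of_lt v.isLt])
      rwa [hcol]
    · obtain ⟨j, -, hj⟩ := mem_htList.mp hmem
      exact hnever j hj
  choose f hf using fun r => exists_htEntry_eq_some_of_isCandidate hN (hcand r)
  have hinj : Function.Injective f := fun a b hab => by
    have := htEntry_eq_some_inj (hf a).1 (hab ▸ (hf b).1)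
    exact Nat.eq_of_mul_eq_mul_right hN (by omega)
  exact not_injective_infinite_finite f hinj

lemma mem_placedBefore_iff_height_lt (hN : 0 < N) (he : e ∈ G.edgeSet) (m : ℕ) :
    e ∈ placedBefore N G w ((m - 1) * N) ↔ height N G w e < m := by
  obtain ⟨k, hk⟩ := exists_htEntry_eq_some (w := w) hN he
  have hidx := htIndex_eq_of_htEntry_eq_some hk
  rw [mem_placedBefore, height, hidx]
  have hrow : k < (m - 1) * N ↔ k / N + 1 < m := by
    rw [← Nat.div_lt_iff_lt_mul hN, Nat.lt_sub_iff_add_lt]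
  rw [← hrow]
  constructor
  · rintro ⟨j, hj, hje⟩
    rwa [htEntry_eq_some_inj hk hje]
  · exact fun hlt => ⟨k, hlt, hk⟩

lemma card_placedBefore : (placedBefore N G w k).card = (filledBefore N G w k).card := by
  refine Finset.card_nbij (htIndex N G w) (fun e he => ?_) (fun e₁ he₁ e₂ he₂ h => ?_)
    (fun j hj => ?_)
  · obtain ⟨j, hj, hje⟩ := mem_placedBefore.mp he
    simp [filledBefore, htIndex_eq_of_htEntry_eq_some hje, hj, hje]
  · obtain ⟨j₁, -, h₁⟩ := mem_placedBefore.mp he₁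
    obtain ⟨j₂, -, h₂⟩ := mem_placedBefore.mp he₂
    rw [htIndex_eq_of_htEntry_eq_some h₁, htIndex_eq_of_htEntry_eq_some h₂] at h
    subst h
    exact Option.some.inj (h₁.symm.trans h₂)
  · obtain ⟨hjk, hsome⟩ := Finset.mem_filter.mp (Finset.mem_coe.mp hj)
    obtain ⟨e, he⟩ := Option.isSome_iff_exists.mp hsome
    exact ⟨e, mem_placedBefore.mpr ⟨j, Finset.mem_range.mp hjk, he⟩,
      htIndex_eq_of_htEntry_eq_some he⟩

/-- Deleting edges never delays the entry of an edge that survives: at the position where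
`G` enters it, it is still a candidate in `G.deleteEdges T`, and the entry there, being a
candidate in `G` too, cannot be `w`-larger. -/
lemma mem_htList_deleteEdges (T : Set (Sym2 (Fin N))) (hw : Function.Injective w) (heT : e ∉ T)
    (he : some e ∈ htList N G w k) :
    some e ∈ htList N (G.deleteEdges T) w k := by
  induction k generalizing e with
  | zero => simp [htList] at he
  | succ k ih =>
    simp only [htList, List.mem_append, List.mem_singleton] at he ⊢
    refine or_iff_not_imp_left.mpr fun hnew => ?_
    obtain he | hk := he
    · exact absurd (ih heT he) hnew
    obtain ⟨hN, hcand, hmax⟩ := htEntry_eq_some hk.symm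
    have hcand' : IsCandidate (G.deleteEdges T) w hN k e :=
      ⟨SimpleGraph.mem_edgeSet_deleteEdges.mpr ⟨hcand.1, heT⟩, hcand.2.1, hnew⟩
    obtain ⟨f, hf, hef⟩ := exists_htEntry_eq_some_of_isCandidate hN hcand'
    obtain ⟨_, ⟨hf', hfv, hfnew⟩, -⟩ := htEntry_eq_some hf
    obtain ⟨hfG, hfT⟩ := SimpleGraph.mem_edgeSet_deleteEdges.mp hf'
    have hfe : f = e := hw (le_antisymm (hmax f ⟨hfG, hfv, fun h => hfnew (ih hfT h)⟩) hef)
    exact hfe ▸ hf.symm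

lemma placedBefore_sdiff_subset (T : Finset (Sym2 (Fin N))) (hw : Function.Injective w) :
    placedBefore N G w k \ T ⊆ placedBefore N (G.deleteEdges ↑T) w k := by
  intro e he
  obtain ⟨he, heT⟩ := Finset.mem_sdiff.mp he
  simp only [placedBefore, Finset.mem_filter, Finset.mem_univ, true_and] at he ⊢
  exact mem_htList_deleteEdges (↑T) hw heT he

lemma filledBefore_deleteEdges_subset (T : Set (Sym2 (Fin N))) (hw : Function.Injective w) :
    filledBefore N (G.deleteEdges T) w k ⊆ filledBefore N G w k := by
  intro j hj
  simp only [filledBefore, Finset.mem_filter, Option.isSome_iff_exists] at hj ⊢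
  obtain ⟨hjk, f, hf⟩ := hj
  obtain ⟨hN, ⟨hf', hfv, hfnew⟩, -⟩ := htEntry_eq_some hf
  obtain ⟨hfG, hfT⟩ := SimpleGraph.mem_edgeSet_deleteEdges.mp hf'
  have hcand : IsCandidate G w hN j f :=
    ⟨hfG, hfv, fun h => hfnew (mem_htList_deleteEdges T hw hfT h)⟩
  obtain ⟨f', hf', -⟩ := exists_htEntry_eq_some_of_isCandidate hN hcand
  exact ⟨hjk, f', hf'⟩

lemma card_placedBefore_deleteEdges_le (T : Set (Sym2 (Fin N))) (hw : Function.Injective w) :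
    (placedBefore N (G.deleteEdges T) w k).card ≤ (placedBefore N G w k).card := by
  rw [card_placedBefore, card_placedBefore]
  exact Finset.card_le_card (filledBefore_deleteEdges_subset T hw)

end EO

lemma Finset.card_le_card_of_sdiff_subset {α : Type*} [DecidableEq α] {A B S T : Finset α}
    (hBA : B.card ≤ A.card) (hA : A \ T ⊆ B) (hS : S \ T ⊆ B) (hAS : Disjoint A S) :
    S.card ≤ T.card := by
  have hAST : (A ∪ S) \ T ⊆ B := by
    rw [Finset.union_sdiff_distrib]
    exact Finset.union_subset hA hS
  have := Finset.card_le_card_sdiff_add_card (s := A ∪ S) (t := T)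
  have := Finset.card_le_card hAST
  rw [Finset.card_union_of_disjoint hAS] at *
  omega

theorem stmt9_general (N : ℕ) (G : SimpleGraph (Fin N)) (w : Sym2 (Fin N) → ℕ)
    (hw : Function.Injective w) (S T : Finset (Sym2 (Fin N)))
    (hS : ∀ e ∈ S, e ∈ G.edgeSet)
    (hcard : T.card < S.card) :
    ∃ e ∈ S, e ∉ T ∧
      (S.image fun f => EO.height N G w f).min'
          ((Finset.card_pos.mp (lt_of_le_of_lt (Nat.zero_le _) hcard)).image _)
        ≤ EO.height N (G.deleteEdges ↑T) w e := by
  set m := (S.image fun f => EO.height N G w f).min' _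
  obtain ⟨e₀, -⟩ := Finset.card_pos.mp (lt_of_le_of_lt (Nat.zero_le _) hcard)
  have hN : 0 < N := Fin.pos e₀.out.1
  by_contra! hlow
  refine hcard.not_ge (Finset.card_le_card_of_sdiff_subset
    (A := EO.placedBefore N G w ((m - 1) * N))
    (EO.card_placedBefore_deleteEdges_le ↑T hw) ?_ (fun e he => ?_) ?_)
  · exact EO.placedBefore_sdiff_subset T hw
  · obtain ⟨heS, heT⟩ := Finset.mem_sdiff.mp he
    exact (EO.mem_placedBefore_iff_height_lt hN
      (SimpleGraph.mem_edgeSet_deleteEdges.mpr ⟨hS e heS, heT⟩) m).mpr (hlow e heS heT)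
  · refine Finset.disjoint_right.mpr fun e heS hA => ?_
    have hm : m ≤ EO.height N G w e := Finset.min'_le _ _ (Finset.mem_image_of_mem _ heS)
    exact hm.not_gt ((EO.mem_placedBefore_iff_height_lt hN (hS e heS) m).mp hA)

/-- Lemma 3.1.  Let `G` be an ordered graph and `S, T ⊆ E(G)` with
`|S| > |T|`.  Then there is an edge `e ∈ S \\ T` with
`h(e, G∖T) ≥ min_{f ∈ S} h(f, G)`, where `G∖T` is the spanning subgraph of `G`
obtained by deleting the edges of `T`. -/
theorem stmt9 (N : ℕ) (G : SimpleGraph (Fin N)) (w : Sym2 (Fin N) → ℕ)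
    (hw : Function.Injective w) (S T : Finset (Sym2 (Fin N)))
    (hS : ∀ e ∈ S, e ∈ G.edgeSet) (hT : ∀ e ∈ T, e ∈ G.edgeSet)
    (hcard : T.card < S.card) :
    ∃ e ∈ S, e ∉ T ∧
      (S.image fun f => EO.height N G w f).min'
          ((Finset.card_pos.mp (lt_of_le_of_lt (Nat.zero_le _) hcard)).image _)
        ≤ EO.height N (G.deleteEdges ↑T) w e :=
  stmt9_general N G w hw S T hS hcard
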